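/- Let a > 0, ψ(x) = (1/(2πa))·exp(−x²/(4πa²)), C(m) = ∫_m^∞ (x − m)·ψ(x) dx and P(m) = C(−m). Define a(m) = C(m)·P(m) and b(m) = C(m)·P(m)·(C(m)+P(m))/2. Then a(0) = a², b(0) = a³, and as m → 0: a(m)/a(0) = 1 − ((π−2)/(4π))·(m/a)² + O(m⁴) and b(m)/b(0) = 1 − ((π−3)/(4π))·(m/a)² + O(m⁴). -/

import Mathlib

/-!
Put–call parity `C(m) - P(m) = -m` gives `C P = ((C + P) / 2) ^ 2 - m ^ 2 / 4`, so `a(m) / a²`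
and `b(m) / a³` are polynomials in `x = (C + P) / (2a)` and `m²`. Since `x ψ(x) = -2πa² ψ'(x)`,
the call price is `C(m) = 2πa² ψ(m) - m ∫_m^∞ ψ`, hence
`x = exp (-m² / (4πa²)) + (m / 2a) ∫_{-m}^m ψ`. As `ψ(x) = ψ(0) + O(x²)`, the central mass is
`m / (πa) + O(m³)`, so `x = 1 + m² / (4πa²) + O(m⁴)`, and expanding the two polynomials gives
the claimed coefficients.
-/

open MeasureTheory

/-- Bachelier's Gaussian density `ψ(x) = (1/(2πa))·exp(−x²/(4πa²))`. -/
noncomputable def bachelierPsi (a x : ℝ) : ℝ :=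
  (2 * Real.pi * a)⁻¹ * Real.exp (-x ^ 2 / (4 * Real.pi * a ^ 2))

/-- Bachelier call price as a function of `m = K − S₀`. -/
noncomputable def bachelierCall (a m : ℝ) : ℝ :=
  ∫ x in Set.Ioi m, (x - m) * bachelierPsi a x

/-- Bachelier put price, `P(m) = C(−m)`. -/
noncomputable def bachelierPut (a m : ℝ) : ℝ := bachelierCall a (-m)

open Real Set Filter Topology Asymptotics

theorem exists_forall_abs_le_of_isBigO {f g : ℝ → ℝ} {n : ℕ} (hn : Even n)
    (hf : f =O[𝓝 0] (· ^ n)) (hg : g =O[𝓝 0] (· ^ n)) :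
    ∃ δ > (0 : ℝ), ∃ M : ℝ, 0 ≤ M ∧
      ∀ m : ℝ, |m| ≤ δ → |f m| ≤ M * m ^ n ∧ |g m| ≤ M * m ^ n := by
  obtain ⟨c₁, hc₁, hf⟩ := hf.exists_nonneg
  obtain ⟨c₂, -, hg⟩ := hg.exists_nonneg
  obtain ⟨ε, hε, hfg⟩ := Metric.eventually_nhds_iff.1 (hf.bound.and hg.bound)
  refine ⟨ε / 2, half_pos hε, max c₁ c₂, le_max_of_le_left hc₁, fun m hm => ?_⟩
  obtain ⟨h₁, h₂⟩ := hfg (show dist m 0 < ε by rw [Real.dist_0_eq_abs]; linarith)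
  simp only [Real.norm_eq_abs, abs_pow, hn.pow_abs] at h₁ h₂
  have hmn : 0 ≤ m ^ n := hn.pow_nonneg m
  exact ⟨h₁.trans (by gcongr; exact le_max_left _ _),
    h₂.trans (by gcongr; exact le_max_right _ _)⟩

theorem Asymptotics.IsBigO.mul_tendsto {α : Type*} {l : Filter α} {f g h : α → ℝ} {b : ℝ}
    (hf : f =O[l] g) (hh : Tendsto h l (𝓝 b)) : (fun t => f t * h t) =O[l] g := by
  simpa only [mul_one] using hf.mul (hh.isBigO_one ℝ)

section QuadraticPerturbation

variable {x : ℝ → ℝ} {c d : ℝ}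

theorem tendsto_of_isBigO_sub_one_add
    (hx : (fun m => x m - (1 + c * m ^ 2)) =O[𝓝 0] (· ^ 4)) :
    Tendsto x (𝓝 0) (𝓝 1) := by
  have he := hx.trans_tendsto ((continuous_pow 4).tendsto' 0 0 (zero_pow four_ne_zero))
  have hq : Tendsto (fun m : ℝ => 1 + c * m ^ 2) (𝓝 0) (𝓝 1) :=
    (Continuous.tendsto' (by fun_prop) 0 1 (by simp))
  simpa using he.add hq

theorem isBigO_sq_sub_of_isBigO (hx : (fun m => x m - (1 + c * m ^ 2)) =O[𝓝 0] (· ^ 4)) :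
    (fun m => x m ^ 2 - d * m ^ 2 - (1 + (2 * c - d) * m ^ 2)) =O[𝓝 0] (· ^ 4) := by
  have hb : Tendsto (fun m => x m + (1 + c * m ^ 2)) (𝓝 0) (𝓝 (1 + (1 + c * 0 ^ 2))) :=
    (tendsto_of_isBigO_sub_one_add hx).add (Continuous.tendsto (by fun_prop) 0)
  exact ((hx.mul_tendsto hb).add ((isBigO_refl (· ^ 4) _).const_mul_left (c ^ 2))).congr_left
    fun m => by ring

theorem isBigO_sq_sub_mul_sub_of_isBigO
    (hx : (fun m => x m - (1 + c * m ^ 2)) =O[𝓝 0] (· ^ 4)) :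
    (fun m => (x m ^ 2 - d * m ^ 2) * x m - (1 + (3 * c - d) * m ^ 2)) =O[𝓝 0] (· ^ 4) := by
  have hq : Tendsto (fun m : ℝ => 1 + (2 * c - d) * m ^ 2) (𝓝 0)
      (𝓝 (1 + (2 * c - d) * 0 ^ 2)) :=
    Continuous.tendsto (by fun_prop) 0
  have hsq := (isBigO_sq_sub_of_isBigO (d := d) hx).mul_tendsto (tendsto_of_isBigO_sub_one_add hx)
  exact ((hsq.add (hx.mul_tendsto hq)).add
    ((isBigO_refl (· ^ 4) _).const_mul_left ((2 * c - d) * c))).congr_left fun m => by ring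

end QuadraticPerturbation

theorem isBigO_exp_neg_mul_sq_sub (b : ℝ) :
    (fun m => exp (-b * m ^ 2) - (1 - b * m ^ 2)) =O[𝓝 0] (· ^ 4) := by
  have h := (Real.exp_sub_sum_range_isBigO_pow 2).comp_tendsto
    (Continuous.tendsto' (by fun_prop : Continuous fun m : ℝ => -b * m ^ 2) 0 0 (by simp))
  refine (h.trans ((isBigO_refl (· ^ 4) _).const_mul_left (b ^ 2) |>.congr_left fun m => ?_))
    |>.congr_left fun m => ?_
  · simp only [Function.comp_apply]; ring
  · simp only [Finset.sum_range_succ, Finset.range_one, Finset.sum_singleton, pow_zero,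
      Nat.factorial_zero, Nat.cast_one, div_one, pow_one, Nat.factorial_one, Function.comp_apply]
    ring

theorem isBigO_intervalIntegral_neg_sub {f : ℝ → ℝ} {K : ℝ} (hf : Continuous f)
    (hK : ∀ x, |f x - f 0| ≤ K * x ^ 2) :
    (fun m => (∫ x in -m..m, f x) - 2 * m * f 0) =O[𝓝 0] (· ^ 3) := by
  refine IsBigO.of_bound (2 * K) (Eventually.of_forall fun m => ?_)
  have hK0 : 0 ≤ K := by simpa using (abs_nonneg _).trans (hK 1)
  have hbound : ∀ x ∈ Set.uIoc (-m) m, ‖f x - f 0‖ ≤ K * m ^ 2 := fun x hx => by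
    have hxm : |x| ≤ |m| := by
      rw [abs_le]
      rcases Set.mem_uIoc.mp hx with ⟨h₁, h₂⟩ | ⟨h₁, h₂⟩ <;> constructor <;>
        linarith [neg_abs_le m, le_abs_self m, neg_le_abs m]
    exact (hK x).trans (mul_le_mul_of_nonneg_left (sq_le_sq.mpr hxm) hK0)
  have h := intervalIntegral.norm_integral_le_of_norm_le_const hbound
  rw [intervalIntegral.integral_sub (hf.intervalIntegrable _ _) intervalIntegrable_const,
    intervalIntegral.integral_const, smul_eq_mul] at h
  simp only [Real.norm_eq_abs, abs_pow, sub_neg_eq_add] at h ⊢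
  calc |(∫ x in -m..m, f x) - 2 * m * f 0| = |(∫ x in -m..m, f x) - (m + m) * f 0| := by ring_nf
    _ ≤ K * m ^ 2 * |m + m| := h
    _ = 2 * K * |m| ^ 3 := by
      rw [← two_mul, abs_mul, abs_two, ← sq_abs m]; ring

theorem bachelierPsi_eq (a x : ℝ) :
    bachelierPsi a x = (2 * π * a)⁻¹ * exp (-(4 * π * a ^ 2)⁻¹ * x ^ 2) := by
  rw [bachelierPsi]; congr 2; ring

theorem bachelierPsi_zero (a : ℝ) : bachelierPsi a 0 = (2 * π * a)⁻¹ := by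
  simp [bachelierPsi]

theorem bachelierPsi_neg (a x : ℝ) : bachelierPsi a (-x) = bachelierPsi a x := by
  simp [bachelierPsi]

theorem continuous_bachelierPsi (a : ℝ) : Continuous (bachelierPsi a) := by
  unfold bachelierPsi; fun_prop

section Density

variable {a : ℝ}

theorem integrable_bachelierPsi (ha : 0 < a) : Integrable (bachelierPsi a) := by
  rw [funext (bachelierPsi_eq a)]
  exact (integrable_exp_neg_mul_sq (by positivity)).const_mul _

theorem integrable_mul_bachelierPsi (ha : 0 < a) :
    Integrable (fun x => x * bachelierPsi a x) := by
  simp_rw [bachelierPsi_eq, mul_left_comm _ (2 * π * a)⁻¹]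
  exact (integrable_mul_exp_neg_mul_sq (b := (4 * π * a ^ 2)⁻¹) (by positivity)).const_mul _

theorem integral_bachelierPsi (ha : 0 < a) : ∫ x, bachelierPsi a x = 1 := by
  simp_rw [bachelierPsi_eq, integral_const_mul, integral_gaussian]
  rw [show π / (4 * π * a ^ 2)⁻¹ = (2 * π * a) ^ 2 by field_simp; ring,
    Real.sqrt_sq (by positivity)]
  field_simp

theorem integral_Ioi_bachelierPsi_add_neg (ha : 0 < a) (m : ℝ) :
    (∫ x in Ioi m, bachelierPsi a x) + ∫ x in Ioi (-m), bachelierPsi a x = 1 := by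
  rw [← integral_comp_neg_Iic]
  simp_rw [bachelierPsi_neg]
  rw [add_comm, intervalIntegral.integral_Iic_add_Ioi (integrable_bachelierPsi ha).integrableOn
    (integrable_bachelierPsi ha).integrableOn, integral_bachelierPsi ha]

theorem hasDerivAt_bachelierPsi (ha : a ≠ 0) (x : ℝ) :
    HasDerivAt (fun y => -(2 * π * a ^ 2) * bachelierPsi a y) (x * bachelierPsi a x) x := by
  unfold bachelierPsi
  refine ((((hasDerivAt_pow 2 x).neg.div_const _).exp.const_mul _).const_mul _).congr_deriv ?_
  simp only [Pi.neg_apply]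
  field_simp
  ring

theorem tendsto_bachelierPsi_atTop (ha : a ≠ 0) : Tendsto (bachelierPsi a) atTop (𝓝 0) := by
  have h : Tendsto (fun y : ℝ => -y ^ 2 / (4 * π * a ^ 2)) atTop atBot := by
    simp_rw [neg_div]
    exact tendsto_neg_atTop_atBot.comp
      ((tendsto_pow_atTop two_ne_zero).atTop_div_const (by positivity))
  unfold bachelierPsi
  simpa only [mul_zero, Function.comp_def] using
    (tendsto_exp_atBot.comp h).const_mul (2 * π * a)⁻¹

theorem integral_Ioi_mul_bachelierPsi (ha : 0 < a) (m : ℝ) :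
    ∫ x in Ioi m, x * bachelierPsi a x = 2 * π * a ^ 2 * bachelierPsi a m := by
  rw [integral_Ioi_of_hasDerivAt_of_tendsto' (fun x _ => hasDerivAt_bachelierPsi ha.ne' x)
    (integrable_mul_bachelierPsi ha).integrableOn
    (by simpa using (tendsto_bachelierPsi_atTop ha.ne').const_mul (-(2 * π * a ^ 2)))]
  ring

theorem bachelierCall_eq (ha : 0 < a) (m : ℝ) :
    bachelierCall a m = 2 * π * a ^ 2 * bachelierPsi a m - m * ∫ x in Ioi m, bachelierPsi a x := by
  simp_rw [bachelierCall, sub_mul]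
  rw [integral_sub (integrable_mul_bachelierPsi ha).integrableOn
    ((integrable_bachelierPsi ha).const_mul m).integrableOn, integral_const_mul,
    integral_Ioi_mul_bachelierPsi ha]

theorem bachelierCall_sub_bachelierPut (ha : 0 < a) (m : ℝ) :
    bachelierCall a m - bachelierPut a m = -m := by
  rw [bachelierPut, bachelierCall_eq ha, bachelierCall_eq ha, bachelierPsi_neg]
  linear_combination (-m) * integral_Ioi_bachelierPsi_add_neg ha m

theorem bachelierCall_add_bachelierPut (ha : 0 < a) (m : ℝ) :
    bachelierCall a m + bachelierPut a m
      = 4 * π * a ^ 2 * bachelierPsi a m + m * ∫ x in -m..m, bachelierPsi a x := by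
  rw [bachelierPut, bachelierCall_eq ha, bachelierCall_eq ha, bachelierPsi_neg,
    ← intervalIntegral.integral_Ioi_sub_Ioi' (integrable_bachelierPsi ha).integrableOn
      (integrable_bachelierPsi ha).integrableOn]
  ring

theorem abs_bachelierPsi_sub_le (ha : 0 < a) (x : ℝ) :
    |bachelierPsi a x - bachelierPsi a 0| ≤ bachelierPsi a 0 * (4 * π * a ^ 2)⁻¹ * x ^ 2 := by
  have ht : 0 ≤ (4 * π * a ^ 2)⁻¹ * x ^ 2 := by positivity
  have hψ : 0 < (2 * π * a)⁻¹ := by positivity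
  have hexp := one_sub_le_exp_neg ((4 * π * a ^ 2)⁻¹ * x ^ 2)
  simp only [bachelierPsi_eq, ne_eq, OfNat.ofNat_ne_zero, not_false_eq_true, zero_pow, mul_zero,
    exp_zero, mul_one, ← mul_sub_one, abs_mul, abs_of_pos hψ, neg_mul] at hexp ⊢
  rw [abs_of_nonpos (by simp only [sub_nonpos, exp_le_one_iff, neg_nonpos]; positivity),
    mul_assoc _ (4 * π * a ^ 2)⁻¹]
  exact mul_le_mul_of_nonneg_left (by linarith) hψ.le

theorem isBigO_bachelierCall_add_bachelierPut (ha : 0 < a) :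
    (fun m => (bachelierCall a m + bachelierPut a m) / (2 * a)
      - (1 + (4 * π * a ^ 2)⁻¹ * m ^ 2)) =O[𝓝 0] (· ^ 4) := by
  have hJ := (isBigO_refl (fun m : ℝ => m) _).mul
    (isBigO_intervalIntegral_neg_sub (continuous_bachelierPsi a) (abs_bachelierPsi_sub_le ha))
  refine ((isBigO_exp_neg_mul_sq_sub (4 * π * a ^ 2)⁻¹).add
    ((hJ.congr_right fun m => by ring).const_mul_left (2 * a)⁻¹)).congr_left fun m => ?_
  rw [bachelierCall_add_bachelierPut ha, bachelierPsi_zero, bachelierPsi_eq]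
  field_simp
  ring

end Density

/-- Rule of Thumb 2: with `a(m) = C(m)P(m)` and `b(m) = C(m)P(m)(C(m)+P(m))/2` one has
`a(0) = a²`, `b(0) = a³`, and the expansions
`a(m)/a(0) = 1 − ((π−2)/(4π))(m/a)² + O(m⁴)`,
`b(m)/b(0) = 1 − ((π−3)/(4π))(m/a)² + O(m⁴)` as `m → 0`. -/
theorem bachelier_rule_of_thumb_two (a : ℝ) (ha : 0 < a) :
    bachelierCall a 0 * bachelierPut a 0 = a ^ 2
      ∧ bachelierCall a 0 * bachelierPut a 0 * ((bachelierCall a 0 + bachelierPut a 0) / 2)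
          = a ^ 3
      ∧ ∃ δ > (0 : ℝ), ∃ M : ℝ, 0 ≤ M ∧ ∀ m : ℝ, |m| ≤ δ →
          |bachelierCall a m * bachelierPut a m / a ^ 2
              - (1 - (Real.pi - 2) / (4 * Real.pi) * (m / a) ^ 2)| ≤ M * m ^ 4
            ∧ |bachelierCall a m * bachelierPut a m
                  * ((bachelierCall a m + bachelierPut a m) / 2) / a ^ 3
                - (1 - (Real.pi - 3) / (4 * Real.pi) * (m / a) ^ 2)| ≤ M * m ^ 4 := by
  have hC₀ : bachelierCall a 0 = a := by
    rw [bachelierCall_eq ha, bachelierPsi_zero]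
    field_simp
    ring
  have hP₀ : bachelierPut a 0 = a := by rw [bachelierPut, neg_zero, hC₀]
  refine ⟨by rw [hC₀, hP₀]; ring, by rw [hC₀, hP₀]; ring, ?_⟩
  have hx := isBigO_bachelierCall_add_bachelierPut ha
  have hP : ∀ m, bachelierPut a m = bachelierCall a m + m := fun m => by
    linarith [bachelierCall_sub_bachelierPut ha m]
  apply exists_forall_abs_le_of_isBigO (by decide)
  · refine (isBigO_sq_sub_of_isBigO (d := (4 * a ^ 2)⁻¹) hx).congr_left fun m => ?_
    rw [hP]
    field_simp
    ring
  · refine (isBigO_sq_sub_mul_sub_of_isBigO (d := (4 * a ^ 2)⁻¹) hx).congr_left fun m => ?_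
    rw [hP]
    field_simp
    ring
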